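/- Let ρ be an admissible weight on [0,∞). Then ρ is bounded on [0,∞) if and only if there exists a set D ⊆ ℕ with bounded gaps such that ρ is bounded on D. -/

import Mathlib

open MeasureTheory Filter Set Topology ENNReal

noncomputable def lowerDensityR (M : Set ℝ) : ℝ :=
  liminf (fun N : ℝ => (volume (M ∩ Set.Icc 0 N)).toReal / N) atTop

open Classical in
noncomputable def lowerDensityN (A : Set ℕ) : ℝ :=
  liminf (fun N : ℕ => (((Finset.range N).filter (fun n => n ∈ A)).card : ℝ) / (N : ℝ)) atTop

section Defs

variable {𝕜 X : Type*} [NontriviallyNormedField 𝕜]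
  [NormedAddCommGroup X] [NormedSpace 𝕜 X]

def IsC0Semigroup (T : ℝ → X →L[𝕜] X) : Prop :=
  T 0 = 1 ∧ (∀ s t : ℝ, 0 ≤ s → 0 ≤ t → T (s + t) = (T s).comp (T t)) ∧
    ∀ x : X, ContinuousOn (fun t => T t x) (Set.Ici 0)

def FreqHypercyclicSemigroup (T : ℝ → X →L[𝕜] X) : Prop :=
  ∃ x : X, ∀ U : Set X, IsOpen U → U.Nonempty →
    0 < lowerDensityR {t : ℝ | 0 ≤ t ∧ T t x ∈ U}

def FreqHypercyclicOp (S : X →L[𝕜] X) : Prop :=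
  ∃ x : X, ∀ U : Set X, IsOpen U → U.Nonempty →
    0 < lowerDensityN {n : ℕ | (S ^ n) x ∈ U}

def HypercyclicOp (S : X →L[𝕜] X) : Prop :=
  ∃ x : X, Dense {y : X | ∃ n : ℕ, (S ^ n) x = y}

def ChaoticOp (S : X →L[𝕜] X) : Prop :=
  HypercyclicOp S ∧ Dense {z : X | ∃ n : ℕ, 1 ≤ n ∧ (S ^ n) z = z}

def HypercyclicSemigroup (T : ℝ → X →L[𝕜] X) : Prop :=
  ∃ x : X, Dense {y : X | ∃ t : ℝ, 0 ≤ t ∧ T t x = y}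

def ChaoticSemigroup (T : ℝ → X →L[𝕜] X) : Prop :=
  HypercyclicSemigroup T ∧ Dense {z : X | ∃ t : ℝ, 0 < t ∧ T t z = z}

end Defs

section Pettis

variable {𝕜 X : Type*} [RCLike 𝕜] [NormedAddCommGroup X] [NormedSpace 𝕜 X]

def PettisIntegrableOnIci (𝕜 : Type*) {X : Type*} [RCLike 𝕜] [NormedAddCommGroup X]
    [NormedSpace 𝕜 X] (f : ℝ → X) : Prop :=
  (∀ φ : StrongDual 𝕜 X, IntegrableOn (fun t => φ (f t)) (Set.Ici 0)) ∧
  ∀ E : Set ℝ, MeasurableSet E → E ⊆ Set.Ici 0 →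
    ∃ xE : X, ∀ φ : StrongDual 𝕜 X, φ xE = ∫ t in E, φ (f t)

def SatisfiesFHCSemigroup (T : ℝ → X →L[𝕜] X) : Prop :=
  ∃ X0 : Set X, Dense X0 ∧ ∃ S : ℝ → X → X,
    (∀ x ∈ X0, ∀ t : ℝ, 0 < t → T t (S t x) = x) ∧
    (∀ x ∈ X0, ∀ r t : ℝ, 0 < t → t < r → T t (S r x) = S (r - t) x) ∧
    (∀ x ∈ X0, PettisIntegrableOnIci 𝕜 (fun t => T t x)) ∧
    (∀ x ∈ X0, PettisIntegrableOnIci 𝕜 (fun t => S t x))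

end Pettis

def AdmissibleWeight (ρ : ℝ → ℝ) : Prop :=
  Measurable ρ ∧ (∀ t : ℝ, 0 ≤ t → 0 < ρ t) ∧
    ∃ M : ℝ, 1 ≤ M ∧ ∃ ω : ℝ, ∀ τ : ℝ, 0 ≤ τ → ∀ t : ℝ, 0 < t →
      ρ τ ≤ M * Real.exp (ω * t) * ρ (τ + t)

def BoundedGapsSet (D : Set ℕ) : Prop :=
  ∃ M : ℕ, 0 < M ∧ ∀ n : ℕ, (D ∩ Set.Icc n (n + M)).Nonempty

noncomputable def weightedMeasure (ρ : ℝ → ℝ) : Measure ℝ :=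
  (volume.restrict (Set.Ici 0)).withDensity (fun t => ENNReal.ofReal (ρ t))

def InGenerator {X : Type*} [NormedAddCommGroup X] [NormedSpace ℂ X]
    (T : ℝ → X →L[ℂ] X) (x y : X) : Prop :=
  Tendsto (fun h : ℝ => h⁻¹ • (T h x - x)) (𝓝[>] (0 : ℝ)) (𝓝 y)

/-! Admissibility bounds `ρ t` by a fixed multiple of `ρ k` whenever `0 < k - t` stays bounded,
and bounded gaps provide such a `k ∈ D` for every `t ≥ 0`. -/

theorem BoundedGapsSet.univ : BoundedGapsSet Set.univ :=
  ⟨1, one_pos, fun n => ⟨n, trivial, le_rfl, Nat.le_add_right n 1⟩⟩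

theorem BoundedGapsSet.exists_mem_Ioc {D : Set ℕ} (hD : BoundedGapsSet D) :
    ∃ L : ℝ, ∀ t : ℝ, 0 ≤ t → ∃ k ∈ D, (k : ℝ) ∈ Set.Ioc t (t + L) := by
  obtain ⟨M, -, hgap⟩ := hD
  refine ⟨M + 1, fun t ht => ?_⟩
  obtain ⟨k, hkD, hk_ge, hk_le⟩ := hgap (⌊t⌋₊ + 1)
  have hk_ge' : (⌊t⌋₊ : ℝ) + 1 ≤ k := by exact_mod_cast hk_ge
  have hk_le' : (k : ℝ) ≤ ⌊t⌋₊ + 1 + M := by exact_mod_cast hk_le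
  exact ⟨k, hkD, (Nat.lt_floor_add_one t).trans_le hk_ge', by linarith [Nat.floor_le ht]⟩

theorem AdmissibleWeight.exists_le_mul_of_le {ρ : ℝ → ℝ} (hρ : AdmissibleWeight ρ) (L : ℝ) :
    ∃ K : ℝ, 0 ≤ K ∧ ∀ τ : ℝ, 0 ≤ τ → ∀ t : ℝ, 0 < t → t ≤ L → ρ τ ≤ K * ρ (τ + t) := by
  obtain ⟨-, hpos, M, hM, ω, hω⟩ := hρ
  refine ⟨M * Real.exp (|ω| * L), by positivity, fun τ hτ t ht htL => ?_⟩
  have hexp : Real.exp (ω * t) ≤ Real.exp (|ω| * L) :=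
    Real.exp_le_exp.2 <| (mul_le_mul_of_nonneg_right (le_abs_self ω) ht.le).trans
      (mul_le_mul_of_nonneg_left htL (abs_nonneg ω))
  calc ρ τ ≤ M * Real.exp (ω * t) * ρ (τ + t) := hω τ hτ t ht
    _ ≤ M * Real.exp (|ω| * L) * ρ (τ + t) := by
      gcongr
      exact (hpos _ (by linarith)).le

theorem statement11 (ρ : ℝ → ℝ) (hρ : AdmissibleWeight ρ) :
    (∃ C : ℝ, ∀ t : ℝ, 0 ≤ t → ρ t ≤ C) ↔
      ∃ D : Set ℕ, BoundedGapsSet D ∧ ∃ C : ℝ, ∀ k ∈ D, ρ ((k : ℕ) : ℝ) ≤ C := by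
  constructor
  · rintro ⟨C, hC⟩
    exact ⟨Set.univ, BoundedGapsSet.univ, C, fun k _ => hC k k.cast_nonneg⟩
  · rintro ⟨D, hD, C, hC⟩
    obtain ⟨L, hL⟩ := hD.exists_mem_Ioc
    obtain ⟨K, hK, hρK⟩ := hρ.exists_le_mul_of_le L
    refine ⟨K * C, fun t ht => ?_⟩
    obtain ⟨k, hkD, htk, hkt⟩ := hL t ht
    calc ρ t ≤ K * ρ (t + (k - t)) := hρK t ht _ (by linarith) (by linarith)
      _ = K * ρ k := by rw [add_sub_cancel]
      _ ≤ K * C := mul_le_mul_of_nonneg_left (hC k hkD) hK
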